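/- Let p ≠ q be primes, a_s = p, b_d = q, a_i = p−1 for 1 ≤ i ≤ s−1, b_i = 0 for 1 ≤ i ≤ s, b_i = q−1 for s+1 ≤ i ≤ d−1, and suppose k = rpq − p(d−s) − qs ∈ {p, q}. Then Δ(A,B) is Gorenstein of index r, i.e., r·Δ(A,B) − (1,…,1) is reflexive. -/

import Mathlib

open scoped BigOperators
open MeasureTheory

noncomputable section

/-- The real point corresponding to a lattice point. -/
def toReal {d : ℕ} (v : Fin d → ℤ) : Fin d → ℝ := fun i => (v i : ℝ)

/-- The finite abelian group `Λ_Δ ⊆ (ℝ/ℤ)^{d+1}` attached to a lattice simplex with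
vertices `v 0, …, v d`. -/
def LambdaSet {d : ℕ} (v : Fin (d + 1) → Fin d → ℤ) :
    Set (Fin (d + 1) → AddCircle (1 : ℝ)) :=
  {lam | ∃ mu : Fin (d + 1) → ℝ,
    (∀ i, ((mu i : ℝ) : AddCircle (1 : ℝ)) = lam i) ∧
    (∀ j, ∃ n : ℤ, ∑ i, mu i * (v i j : ℝ) = (n : ℝ)) ∧
    (∃ n : ℤ, ∑ i, mu i = (n : ℝ))}

/-- The simplex spanned by the given lattice points. -/
def simplexOf {d : ℕ} (v : Fin (d + 1) → Fin d → ℤ) : Set (Fin d → ℝ) :=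
  convexHull ℝ (Set.range fun i => toReal (v i))

/-- The dual (polar) body `{y : ⟨x,y⟩ ≤ 1 ∀ x ∈ P}`. -/
def polarDual {d : ℕ} (P : Set (Fin d → ℝ)) : Set (Fin d → ℝ) :=
  {y | ∀ x ∈ P, ∑ i, x i * y i ≤ 1}

/-- A point of `ℝ^d` is a lattice point if all its coordinates are integers. -/
def IsLatticePoint {d : ℕ} (x : Fin d → ℝ) : Prop := ∀ i, ∃ n : ℤ, x i = (n : ℝ)

/-- A polytope is reflexive if the origin is its unique interior lattice point and its
dual polytope is again a lattice polytope. -/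
def IsReflexive {d : ℕ} (P : Set (Fin d → ℝ)) : Prop :=
  (0 ∈ interior P) ∧
  (∀ x ∈ interior P, IsLatticePoint x → x = 0) ∧
  ∃ V : Finset (Fin d → ℤ), polarDual P = convexHull ℝ (toReal '' (V : Set (Fin d → ℤ)))

/-- A lattice polytope is Gorenstein of index `r` if some lattice translate of its
`r`-th dilate is reflexive. -/
def IsGorenstein {d : ℕ} (P : Set (Fin d → ℝ)) (r : ℕ) : Prop :=
  ∃ w : Fin d → ℤ, IsReflexive ((fun x => (r : ℝ) • x + toReal w) '' P)

/-- Unimodular equivalence of subsets of `ℝ^d`. -/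
def UnimodEquiv {d : ℕ} (P Q : Set (Fin d → ℝ)) : Prop :=
  ∃ (U : Matrix (Fin d) (Fin d) ℤ) (w : Fin d → ℤ), IsUnit U.det ∧
    Q = (fun x => fun j => (∑ i, x i * (U i j : ℝ)) + (w j : ℝ)) '' P

/-- `P` is a lattice pyramid: it is unimodularly equivalent to
`conv(V × {0}, e_j)` for a finite set `V` of lattice points lying in a coordinate
hyperplane. -/
def IsLatticePyramid {d : ℕ} (P : Set (Fin d → ℝ)) : Prop :=
  ∃ (j : Fin d) (V : Finset (Fin d → ℤ)),
    (∀ x ∈ V, x j = 0) ∧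
    UnimodEquiv P (convexHull ℝ
      ((toReal '' (V : Set (Fin d → ℤ))) ∪ {fun i => if i = j then (1 : ℝ) else 0}))

/-- The vertices of the simplex `Δ(A)` associated to `A = (a 1, …, a d)`:
`v 0 = 0`, `v i = e_i` for `1 ≤ i ≤ d-1`, and
`v d = ∑_{j=1}^{d-1} (a d - a j) e_j + (a d) e_d`. -/
def simplexVerts (d : ℕ) (a : ℕ → ℤ) : Fin (d + 1) → Fin d → ℤ := fun i j =>
  if (i : ℕ) = 0 then 0
  else if (i : ℕ) = d then (if (j : ℕ) = d - 1 then a d else a d - a ((j : ℕ) + 1))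
  else if (j : ℕ) + 1 = (i : ℕ) then 1 else 0

/-- The vertices of the simplex `Δ(A,B)`: `v 0 = 0`, `v i = e_i` for
`i ∉ {0, s, d}`, `v s = ∑_{j=1}^s (a j) e_j`, `v d = ∑_{j=1}^d (b j) e_j`. -/
def simplexVerts2 (d s : ℕ) (a b : ℕ → ℤ) : Fin (d + 1) → Fin d → ℤ := fun i j =>
  if (i : ℕ) = 0 then 0
  else if (i : ℕ) = s then (if (j : ℕ) + 1 ≤ s then a ((j : ℕ) + 1) else 0)
  else if (i : ℕ) = d then b ((j : ℕ) + 1)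
  else if (j : ℕ) + 1 = (i : ℕ) then 1 else 0


/-!
Write `v_i` for the vertices of `Δ(A,B)` and `w_i = r v_i - 1`. We exhibit integer vectors
`u_0, …, u_d` with `⟨w_i, u_k⟩ = 1` for `i ≠ k` and `⟨w_k, u_k⟩ = 1 - g_k`, `g_k > 0`: for `k ≥ 1`,
`u_k` is `-h_k` times the `k`-th vector of the basis dual to `v_1, …, v_d` (`h_k = p` for `k ≤ s`,
`h_k = q` otherwise), and `u_0` is `c = pq/k` times the sum of these dual basis vectors, where
`k = rpq - p(d-s) - qs`. The hypothesis `k ∈ {p, q}` is what makes `u_0` integral.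

Such a family consists of the facet normals of the simplex `conv w`. In homogeneous coordinates the
relations say that the square matrices `[1 | w]` and `[-1 | u]ᵀ` are inverse up to a diagonal
factor, and this gives every `x` the barycentric coordinates `(1 - ⟨u_k, x⟩) / g_k`. Hence
`conv w = {x | ⟨u_k, x⟩ ≤ 1 ∀ k}`, its polar is `conv u`, a lattice polytope, and an interior
lattice point `x` has all `⟨u_k, x⟩` nonpositive integers with `∑ ⟨u_k, x⟩ / g_k = 0`, so `x = 0`.
-/

open Matrix Topology Filter

section FacetNormals

variable {d : ℕ}

def AreFacetNormals (w u : Fin (d + 1) → Fin d → ℝ) (g : Fin (d + 1) → ℝ) : Prop :=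
  ∀ i k, w i ⬝ᵥ u k = 1 - if i = k then g k else 0

variable {w u : Fin (d + 1) → Fin d → ℝ} {g : Fin (d + 1) → ℝ}

theorem AreFacetNormals.symm (h : AreFacetNormals w u g) : AreFacetNormals u w g := by
  intro i k
  rw [dotProduct_comm, h k i]
  rcases eq_or_ne i k with rfl | hik
  · rfl
  · simp [hik, hik.symm]

def baryCoord (u : Fin (d + 1) → Fin d → ℝ) (g : Fin (d + 1) → ℝ) (x : Fin d → ℝ)
    (k : Fin (d + 1)) : ℝ :=
  (1 - u k ⬝ᵥ x) / g k

theorem AreFacetNormals.baryCoord_spec (h : AreFacetNormals w u g) (hg : ∀ k, g k ≠ 0)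
    (x : Fin d → ℝ) :
    ∑ k, baryCoord u g x k = 1 ∧ ∑ k, baryCoord u g x k • w k = x := by
  let W : Matrix (Fin (d + 1)) (Fin (d + 1)) ℝ := fun i => vecCons 1 (w i)
  let U : Matrix (Fin (d + 1)) (Fin (d + 1)) ℝ := fun k => vecCons (-1) (u k)
  have hWU : W * Uᵀ = -diagonal g := by
    ext i k
    rw [mul_apply]
    change W i ⬝ᵥ U k = _
    simp only [W, U, cons_dotProduct_cons, h i k, Matrix.neg_apply, diagonal_apply]
    split_ifs with hik
    · subst hik
      ring
    · ring
  have hinv : W * -(Uᵀ * diagonal fun k => (g k)⁻¹) = 1 := by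
    rw [mul_neg, ← Matrix.mul_assoc, hWU, neg_mul, neg_neg, diagonal_mul_diagonal,
      ← diagonal_one]
    exact congrArg diagonal (funext fun k => mul_inv_cancel₀ (hg k))
  have hβ : vecCons 1 x ᵥ* -(Uᵀ * diagonal fun k => (g k)⁻¹) = baryCoord u g x := by
    ext k
    rw [vecMul_neg, ← vecMul_vecMul, vecMul_transpose, Pi.neg_apply, vecMul_diagonal]
    simp only [mulVec, U, cons_dotProduct_cons, baryCoord]
    ring
  -- a right inverse of the square matrix `W` is also a left inverse; apply it to `(1, x)`
  have key := mul_eq_one_comm.mp hinv ▸ vecMul_vecMul (vecCons 1 x) _ W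
  rw [vecMul_one, hβ] at key
  refine ⟨?_, ?_⟩
  · have := congrFun key 0
    simpa [vecMul, dotProduct, W] using this
  · ext n
    have := congrFun key n.succ
    simpa [vecMul, dotProduct, W] using this

theorem IsLatticePoint.dotProduct {y x : Fin d → ℝ} (hy : IsLatticePoint y)
    (hx : IsLatticePoint x) : ∃ n : ℤ, y ⬝ᵥ x = n := by
  choose a ha using hy
  choose b hb using hx
  exact ⟨∑ j, a j * b j, by rw [_root_.dotProduct]; push_cast; simp only [ha, hb]⟩

theorem convex_setOf_dotProduct_le (y : Fin d → ℝ) : Convex ℝ {x | y ⬝ᵥ x ≤ 1} :=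
  convex_halfSpace_le ⟨dotProduct_add y, fun c x => dotProduct_smul c y x⟩ 1

theorem polarDual_convexHull (s : Set (Fin d → ℝ)) :
    polarDual (convexHull ℝ s) = polarDual s := by
  refine subset_antisymm (fun y hy x hx => hy x (subset_convexHull ℝ s hx)) fun y hy => ?_
  have hull : convexHull ℝ s ⊆ {x | y ⬝ᵥ x ≤ 1} :=
    convexHull_min (fun x hx => (dotProduct_comm y x).trans_le (hy x hx))
      (convex_setOf_dotProduct_le y)
  exact fun x hx => (dotProduct_comm x y).trans_le (hull hx)

theorem dotProduct_lt_one_of_mem_interior {y x : Fin d → ℝ}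
    (hx : x ∈ interior {x | y ⬝ᵥ x ≤ 1}) : y ⬝ᵥ x < 1 := by
  by_cases hy : y = 0
  · simp [hy]
  have hline : ∀ᶠ t : ℝ in 𝓝 0, x + t • y ∈ {x | y ⬝ᵥ x ≤ 1} :=
    (Continuous.continuousAt (f := fun t : ℝ => x + t • y) (by fun_prop)).preimage_mem_nhds
      (by simpa using mem_interior_iff_mem_nhds.1 hx)
  obtain ⟨t, hmem, ht⟩ := ((hline.filter_mono nhdsWithin_le_nhds).and
    (self_mem_nhdsWithin : Set.Ioi (0 : ℝ) ∈ 𝓝[>] 0)).exists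
  have hyy : 0 < y ⬝ᵥ y := by simpa using dotProduct_star_self_pos_iff.2 hy
  simp only [Set.mem_ofPred_eq, dotProduct_add, dotProduct_smul, smul_eq_mul] at hmem
  nlinarith [mul_pos (Set.mem_Ioi.1 ht) hyy]

variable (u) in
theorem zero_mem_interior_setOf_dotProduct_le :
    (0 : Fin d → ℝ) ∈ interior {x | ∀ k, u k ⬝ᵥ x ≤ 1} := by
  have hopen : IsOpen {x : Fin d → ℝ | ∀ k, u k ⬝ᵥ x < 1} := by
    simp only [Set.ofPred_forall]
    exact isOpen_iInter_of_finite fun k => isOpen_lt (by fun_prop) continuous_const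
  exact interior_maximal (fun x hx k => (hx k).le) hopen (by simp)

theorem AreFacetNormals.convexHull_eq (h : AreFacetNormals w u g) (hg : ∀ k, 0 < g k) :
    convexHull ℝ (Set.range w) = {x | ∀ k, u k ⬝ᵥ x ≤ 1} := by
  refine subset_antisymm (convexHull_min ?_ ?_) fun x hx => ?_
  · rintro _ ⟨i, rfl⟩ k
    rw [h.symm k i]
    split_ifs
    · linarith [hg i]
    · simp
  · simp only [Set.ofPred_forall]
    exact convex_iInter fun k => convex_setOf_dotProduct_le (u k)
  · obtain ⟨hsum, hx_eq⟩ := h.baryCoord_spec (fun k => (hg k).ne') x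
    have : ∑ k, baryCoord u g x k • w k ∈ convexHull ℝ (Set.range w) :=
      (convex_convexHull ℝ _).sum_mem (fun k _ => div_nonneg (sub_nonneg.2 (hx k)) (hg k).le)
        hsum (fun k _ => subset_convexHull ℝ _ ⟨k, rfl⟩)
    rwa [hx_eq] at this

theorem AreFacetNormals.polarDual_eq (h : AreFacetNormals w u g) (hg : ∀ k, 0 < g k) :
    polarDual (convexHull ℝ (Set.range w)) = convexHull ℝ (Set.range u) := by
  rw [polarDual_convexHull, h.symm.convexHull_eq hg]
  ext y
  simp [polarDual, dotProduct]

theorem AreFacetNormals.eq_zero_of_mem_interior (h : AreFacetNormals w u g) (hg : ∀ k, 0 < g k)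
    (hu : ∀ k, IsLatticePoint (u k)) {x : Fin d → ℝ}
    (hx : x ∈ interior (convexHull ℝ (Set.range w))) (hxl : IsLatticePoint x) : x = 0 := by
  rw [h.convexHull_eq hg] at hx
  have hnonpos : ∀ k, u k ⬝ᵥ x ≤ 0 := fun k => by
    obtain ⟨n, hn⟩ := (hu k).dotProduct hxl
    have hsub : {x : Fin d → ℝ | ∀ k, u k ⬝ᵥ x ≤ 1} ⊆ {x | u k ⬝ᵥ x ≤ 1} :=
      fun x hx => hx k
    have := dotProduct_lt_one_of_mem_interior (interior_mono hsub hx)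
    rw [hn] at this ⊢
    exact_mod_cast Int.lt_add_one_iff.1 (by exact_mod_cast this)
  have hg' : ∀ k, g k ≠ 0 := fun k => (hg k).ne'
  obtain ⟨hsum_x, hx_eq⟩ := h.baryCoord_spec hg' x
  obtain ⟨hsum_0, h0_eq⟩ := h.baryCoord_spec hg' 0
  have hle : ∀ k ∈ Finset.univ, baryCoord u g 0 k ≤ baryCoord u g x k := fun k _ =>
    div_le_div_of_nonneg_right (by simp [hnonpos k]) (hg k).le
  have hbary : baryCoord u g x = baryCoord u g 0 := funext fun k =>
    ((Finset.sum_eq_sum_iff_of_le hle).1 (hsum_0.trans hsum_x.symm) k (Finset.mem_univ k)).symm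
  rw [← hx_eq, hbary, h0_eq]

theorem AreFacetNormals.isReflexive {v : Fin (d + 1) → Fin d → ℤ}
    (h : AreFacetNormals w (fun k => toReal (v k)) g) (hg : ∀ k, 0 < g k) :
    IsReflexive (convexHull ℝ (Set.range w)) := by
  refine ⟨?_, fun x hx hxl => h.eq_zero_of_mem_interior hg (fun k j => ⟨v k j, rfl⟩) hx hxl,
    Finset.univ.image v, ?_⟩
  · rw [h.convexHull_eq hg]
    exact zero_mem_interior_setOf_dotProduct_le _
  · rw [h.polarDual_eq hg, Finset.coe_image, Finset.coe_univ, Set.image_univ, ← Set.range_comp]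
    rfl

end FacetNormals

theorem toReal_dotProduct_toReal {d : ℕ} (x y : Fin d → ℤ) :
    toReal x ⬝ᵥ toReal y = ((x ⬝ᵥ y : ℤ) : ℝ) := by
  simp [toReal, dotProduct]

theorem image_smul_sub_one_simplexOf {d : ℕ} (r : ℕ) (v : Fin (d + 1) → Fin d → ℤ) :
    (fun x => (r : ℝ) • x - 1) '' simplexOf v =
      convexHull ℝ (Set.range fun i => toReal (r • v i - 1)) := by
  let φ : (Fin d → ℝ) →ᵃ[ℝ] (Fin d → ℝ) :=
    ((r : ℝ) • LinearMap.id).toAffineMap - AffineMap.const ℝ _ 1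
  have hφ : (fun x => (r : ℝ) • x - 1) = φ := by
    ext x
    simp [φ]
  rw [hφ, simplexOf, φ.image_convexHull, ← Set.range_comp]
  congr
  ext i j
  simp [φ, toReal]

-- `c = pq/k`; `e` and `f` are the entries of `u_0` at `s` and `d`.
theorem exists_dualVerts_params {p q : ℤ} (m n r : ℤ)
    (hk : r * p * q - p * n - q * m = p ∨ r * p * q - p * n - q * m = q) (hp : 0 < p)
    (hq : 0 < q) :
    ∃ c e f : ℤ, 0 < c ∧ c * (r * p * q - p * n - q * m) = p * q ∧
      p * e = c * (m + p * (1 - m)) ∧ q * f = c * (n + q * (1 - n)) := by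
  rcases hk with hk | hk
  · exact ⟨q, r * q - n - 1 + q * (1 - m), n + q * (1 - n), hq, by linear_combination q * hk,
      by linear_combination hk, by ring⟩
  · exact ⟨p, m + p * (1 - m), r * p - m - 1 + p * (1 - n), hp, by linear_combination p * hk,
      by ring, by linear_combination hk⟩

section DualVertices

variable {d : ℕ}

-- The paper's `e_t`: coordinates are indexed from `1`, so `j : Fin d` is coordinate `j + 1`.
def unitVec (d t : ℕ) : Fin d → ℤ := fun j => if (j : ℕ) + 1 = t then 1 else 0

theorem dotProduct_unitVec (x : Fin d → ℤ) {t : ℕ} (ht : 1 ≤ t) (htd : t ≤ d) :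
    x ⬝ᵥ unitVec d t = x ⟨t - 1, by omega⟩ := by
  rw [_root_.dotProduct, Finset.sum_eq_single ⟨t - 1, by omega⟩]
  · simp [unitVec, Nat.sub_add_cancel ht]
  · intro j _ hj
    have : (j : ℕ) + 1 ≠ t := fun h => hj (Fin.ext (Nat.eq_sub_of_add_eq h))
    simp [unitVec, this]
  · simp

variable {s p q : ℕ}

-- Coordinate `t` of the vertex `v_i` of `Δ(A,B)` for the `A`, `B` of the theorem.
def vertCoord (d s p q : ℕ) (i t : ℕ) : ℤ :=
  if i = 0 then 0
  else if i = s then (if t < s then (p : ℤ) - 1 else if t = s then p else 0)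
  else if i = d then (if t ≤ s then 0 else if t < d then (q : ℤ) - 1 else q)
  else if t = i then 1 else 0

def vertsAB (d s p q : ℕ) (i : Fin (d + 1)) (j : Fin d) : ℤ := vertCoord d s p q i (j + 1)

theorem simplexVerts2_eq_vertsAB {a b : ℕ → ℤ}
    (ha : ∀ i, 1 ≤ i → i ≤ s - 1 → a i = (p : ℤ) - 1) (has : a s = (p : ℤ))
    (hb1 : ∀ i, 1 ≤ i → i ≤ s → b i = 0)
    (hb2 : ∀ i, s + 1 ≤ i → i ≤ d - 1 → b i = (q : ℤ) - 1) (hbd : b d = (q : ℤ)) :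
    simplexVerts2 d s a b = vertsAB d s p q := by
  funext i j
  have hj := j.isLt
  simp only [simplexVerts2, vertsAB, vertCoord]
  split_ifs <;>
    first
      | rfl
      | omega
      | exact ha _ (by omega) (by omega)
      | exact hb1 _ (by omega) (by omega)
      | exact hb2 _ (by omega) (by omega)
      | (rw [show (j : ℕ) + 1 = s by omega]; exact has)
      | (rw [show (j : ℕ) + 1 = d by omega]; exact hbd)

theorem vertsAB_dotProduct_unitVec (i : Fin (d + 1)) {t : ℕ} (ht : 1 ≤ t) (htd : t ≤ d) :
    vertsAB d s p q i ⬝ᵥ unitVec d t = vertCoord d s p q i t := by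
  rw [dotProduct_unitVec _ ht htd, vertsAB, Nat.sub_add_cancel ht]

theorem sum_range_vertCoord_s (hs : 1 ≤ s) (hsd : s < d) :
    ∑ t ∈ Finset.range d, vertCoord d s p q s (t + 1) =
      ((s : ℤ) - 1) * ((p : ℤ) - 1) + p := by
  obtain ⟨s, rfl⟩ : ∃ s', s = s' + 1 := ⟨s - 1, by omega⟩
  obtain ⟨m, rfl⟩ : ∃ m, d = s + 1 + m := ⟨d - s - 1, by omega⟩
  rw [Finset.sum_range_add, Finset.sum_range_succ, Finset.sum_eq_card_nsmul (b := (p : ℤ) - 1),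
    Finset.sum_eq_card_nsmul (b := 0)]
  all_goals simp only [vertCoord, Finset.mem_range, Finset.card_range, nsmul_eq_mul]
  · split_ifs <;> first | contradiction | omega | (push_cast; ring)
  all_goals
    intro j hj
    split_ifs <;> first | contradiction | omega

theorem sum_range_vertCoord_d (hsd : s < d) :
    ∑ t ∈ Finset.range d, vertCoord d s p q d (t + 1) =
      ((d : ℤ) - s - 1) * ((q : ℤ) - 1) + q := by
  obtain ⟨m, rfl⟩ : ∃ m, d = s + m + 1 := ⟨d - s - 1, by omega⟩
  rw [Finset.sum_range_succ, Finset.sum_range_add, Finset.sum_eq_card_nsmul (b := 0),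
    Finset.sum_eq_card_nsmul (b := (q : ℤ) - 1)]
  all_goals simp only [vertCoord, Finset.mem_range, Finset.card_range, nsmul_eq_mul]
  · split_ifs <;> first | contradiction | omega | (push_cast; ring)
  all_goals
    intro j hj
    split_ifs <;> first | contradiction | omega

theorem vertsAB_dotProduct_one (hs : 1 ≤ s) (hsd : s < d) (i : Fin (d + 1)) :
    vertsAB d s p q i ⬝ᵥ 1 =
      if (i : ℕ) = 0 then 0
      else if (i : ℕ) = s then ((s : ℤ) - 1) * ((p : ℤ) - 1) + p
      else if (i : ℕ) = d then ((d : ℤ) - s - 1) * ((q : ℤ) - 1) + q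
      else 1 := by
  rw [dotProduct_one]
  unfold vertsAB
  rw [Fin.sum_univ_eq_sum_range (fun t => vertCoord d s p q i (t + 1))]
  have hi := i.isLt
  generalize (i : ℕ) = n at hi ⊢
  split_ifs with h0 hsi hdi
  · simp [vertCoord, h0]
  · rw [hsi, sum_range_vertCoord_s hs hsd]
  · rw [hdi, sum_range_vertCoord_d hsd]
  · rw [Finset.sum_eq_single (n - 1)]
    all_goals simp only [vertCoord, Finset.mem_range]
    · split_ifs <;> omega
    · intro j _ hj
      split_ifs <;> omega
    · omega

def dualVerts (d s p q : ℕ) (c e f : ℤ) (k : Fin (d + 1)) : Fin d → ℤ :=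
  if (k : ℕ) = 0 then c • 1 + (e - c) • unitVec d s + (f - c) • unitVec d d
  else if (k : ℕ) ≤ s then -(p : ℤ) • unitVec d k + ((p : ℤ) - 1) • unitVec d s
  else -(q : ℤ) • unitVec d k + ((q : ℤ) - 1) • unitVec d d

variable {c e f : ℤ}

theorem vertsAB_dotProduct_dualVerts_of_ne_zero (hs : 1 ≤ s) (hsd : s < d) (i : Fin (d + 1))
    {k : Fin (d + 1)} (hk : (k : ℕ) ≠ 0) :
    vertsAB d s p q i ⬝ᵥ dualVerts d s p q c e f k =
      if (i : ℕ) = k then -(if (k : ℕ) ≤ s then (p : ℤ) else q) else 0 := by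
  have hkd := k.isLt
  rw [dualVerts, if_neg hk]
  rcases le_or_gt (k : ℕ) s with hks | hks
  · rw [if_pos hks, if_pos hks, dotProduct_add, dotProduct_smul, dotProduct_smul,
      vertsAB_dotProduct_unitVec _ (by omega) (by omega),
      vertsAB_dotProduct_unitVec _ hs hsd.le]
    simp only [vertCoord, smul_eq_mul]
    split_ifs <;> first | omega | ring
  · rw [if_neg hks.not_ge, if_neg hks.not_ge, dotProduct_add, dotProduct_smul, dotProduct_smul,
      vertsAB_dotProduct_unitVec _ (by omega) (by omega),
      vertsAB_dotProduct_unitVec _ (by omega) le_rfl]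
    simp only [vertCoord, smul_eq_mul]
    split_ifs <;> first | omega | ring

theorem one_dotProduct_dualVerts_of_ne_zero (hs : 1 ≤ s) (hsd : s < d) {k : Fin (d + 1)}
    (hk : (k : ℕ) ≠ 0) : 1 ⬝ᵥ dualVerts d s p q c e f k = -1 := by
  have hkd := k.isLt
  rw [dualVerts, if_neg hk]
  split_ifs with hks
  · rw [dotProduct_add, dotProduct_smul, dotProduct_smul,
      dotProduct_unitVec _ (by omega) (by omega), dotProduct_unitVec _ hs hsd.le]
    simp only [Pi.one_apply, smul_eq_mul]
    ring
  · rw [dotProduct_add, dotProduct_smul, dotProduct_smul,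
      dotProduct_unitVec _ (by omega) (by omega), dotProduct_unitVec _ (by omega) le_rfl]
    simp only [Pi.one_apply, smul_eq_mul]
    ring

theorem vertsAB_dotProduct_dualVerts_zero (hs : 1 ≤ s) (hsd : s < d)
    (hpe : p * e = c * (s + p * (1 - s))) (hqf : q * f = c * ((d - s) + q * (1 - (d - s))))
    (i : Fin (d + 1)) :
    vertsAB d s p q i ⬝ᵥ dualVerts d s p q c e f 0 = if (i : ℕ) = 0 then 0 else c := by
  rw [dualVerts, if_pos (Fin.val_zero (d + 1)), dotProduct_add, dotProduct_add, dotProduct_smul,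
    dotProduct_smul, dotProduct_smul, vertsAB_dotProduct_one hs hsd,
    vertsAB_dotProduct_unitVec _ hs hsd.le,
    vertsAB_dotProduct_unitVec _ (by omega) le_rfl]
  simp only [vertCoord, smul_eq_mul]
  split_ifs <;> first | omega | linear_combination hpe | linear_combination hqf

theorem one_dotProduct_dualVerts_zero (hs : 1 ≤ s) (hsd : s < d) (hp : 0 < p) (hq : 0 < q)
    (r : ℕ) (hpe : p * e = c * (s + p * (1 - s)))
    (hqf : q * f = c * ((d - s) + q * (1 - (d - s))))
    (hck : c * (r * p * q - p * (d - s) - q * s) = p * q) :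
    1 ⬝ᵥ dualVerts d s p q c e f 0 = r * c - 1 := by
  rw [dualVerts, if_pos (Fin.val_zero (d + 1)), dotProduct_add, dotProduct_add, dotProduct_smul,
    dotProduct_smul, dotProduct_smul, one_dotProduct_one, dotProduct_unitVec _ hs hsd.le,
    dotProduct_unitVec _ (by omega) le_rfl]
  have hpq : (p : ℤ) * q ≠ 0 := by positivity
  apply mul_left_cancel₀ hpq
  simp only [Fintype.card_fin, Pi.one_apply, smul_eq_mul]
  linear_combination q * hpe + p * hqf - hck

theorem areFacetNormals_vertsAB (hs : 1 ≤ s) (hsd : s < d) (hp : 0 < p) (hq : 0 < q) (r : ℕ)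
    (hpe : p * e = c * (s + p * (1 - s))) (hqf : q * f = c * ((d - s) + q * (1 - (d - s))))
    (hck : c * (r * p * q - p * (d - s) - q * s) = p * q) :
    AreFacetNormals (fun i => toReal (r • vertsAB d s p q i - 1))
      (fun k => toReal (dualVerts d s p q c e f k))
      (fun k => ((r * if (k : ℕ) = 0 then c else if (k : ℕ) ≤ s then p else q : ℤ) : ℝ)) := by
  intro i k
  rw [toReal_dotProduct_toReal, sub_dotProduct, smul_dotProduct, nsmul_eq_mul]
  by_cases hk : (k : ℕ) = 0
  · obtain rfl : k = 0 := Fin.ext hk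
    rw [vertsAB_dotProduct_dualVerts_zero hs hsd hpe hqf,
      one_dotProduct_dualVerts_zero hs hsd hp hq r hpe hqf hck]
    by_cases hi : i = 0 <;> simp [hi]
  · rw [vertsAB_dotProduct_dualVerts_of_ne_zero hs hsd i hk,
      one_dotProduct_dualVerts_of_ne_zero hs hsd hk]
    simp only [Fin.ext_iff, hk, if_false]
    split_ifs <;> push_cast <;> ring

end DualVertices

theorem statement13_general (d s : ℕ) (hs : 1 ≤ s) (hsd : s < d)
    (p q r : ℕ) (hp : p.Prime) (hq : q.Prime) (hr : 1 ≤ r)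
    (a b : ℕ → ℤ)
    (ha : ∀ i, 1 ≤ i → i ≤ s - 1 → a i = (p : ℤ) - 1) (has : a s = (p : ℤ))
    (hb1 : ∀ i, 1 ≤ i → i ≤ s → b i = 0)
    (hb2 : ∀ i, s + 1 ≤ i → i ≤ d - 1 → b i = (q : ℤ) - 1) (hbd : b d = (q : ℤ))
    (hk : (r : ℤ) * p * q - p * ((d : ℤ) - s) - q * s = (p : ℤ) ∨
          (r : ℤ) * p * q - p * ((d : ℤ) - s) - q * s = (q : ℤ)) :
    IsGorenstein (simplexOf (simplexVerts2 d s a b)) r ∧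
      IsReflexive ((fun x => (r : ℝ) • x - 1) '' simplexOf (simplexVerts2 d s a b)) := by
  have hp0 : (0 : ℤ) < p := by exact_mod_cast hp.pos
  have hq0 : (0 : ℤ) < q := by exact_mod_cast hq.pos
  obtain ⟨c, e, f, hc, hck, hpe, hqf⟩ :=
    exists_dualVerts_params (s : ℤ) ((d : ℤ) - s) r hk hp0 hq0
  have hrefl :
      IsReflexive ((fun x => (r : ℝ) • x - 1) '' simplexOf (simplexVerts2 d s a b)) := by
    rw [simplexVerts2_eq_vertsAB ha has hb1 hb2 hbd, image_smul_sub_one_simplexOf]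
    refine (areFacetNormals_vertsAB hs hsd hp.pos hq.pos r hpe hqf hck).isReflexive fun k => ?_
    have hr0 : (0 : ℤ) < r := by exact_mod_cast hr
    exact_mod_cast mul_pos hr0 (by split_ifs <;> assumption)
  refine ⟨⟨-1, ?_⟩, hrefl⟩
  convert hrefl using 3
  ext x
  simp [toReal, sub_eq_add_neg]

/-- with `a i = p - 1` for `1 ≤ i ≤ s-1`, `a s = p`, `b i = 0` for
`1 ≤ i ≤ s`, `b i = q - 1` for `s+1 ≤ i ≤ d-1`, `b d = q` (`p ≠ q` primes), and
`k = rpq - p(d-s) - qs ∈ {p, q}`, the simplex `Δ(A,B)` is Gorenstein of index `r`,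
i.e. `r·Δ(A,B) - (1,…,1)` is reflexive. -/
theorem statement13 (d s : ℕ) (hs : 1 ≤ s) (hsd : s < d)
    (p q r : ℕ) (hp : p.Prime) (hq : q.Prime) (hpq : p ≠ q) (hr : 1 ≤ r)
    (a b : ℕ → ℤ)
    (ha : ∀ i, 1 ≤ i → i ≤ s - 1 → a i = (p : ℤ) - 1) (has : a s = (p : ℤ))
    (hb1 : ∀ i, 1 ≤ i → i ≤ s → b i = 0)
    (hb2 : ∀ i, s + 1 ≤ i → i ≤ d - 1 → b i = (q : ℤ) - 1) (hbd : b d = (q : ℤ))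
    (hk : (r : ℤ) * p * q - p * ((d : ℤ) - s) - q * s = (p : ℤ) ∨
          (r : ℤ) * p * q - p * ((d : ℤ) - s) - q * s = (q : ℤ)) :
    IsGorenstein (simplexOf (simplexVerts2 d s a b)) r ∧
      IsReflexive ((fun x => (r : ℝ) • x - 1) '' simplexOf (simplexVerts2 d s a b)) :=
  statement13_general d s hs hsd p q r hp hq hr a b ha has hb1 hb2 hbd hk
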